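/- arXiv:2003.02393 — 6 statements merged into one kernel-verified Lean document; each statement's English description precedes it below -/
import Mathlib

section
/- Let G be a finite simple graph with minimum degree at least 3 and girth g ≥ 5, and let C be any cycle in G of length g. Then every connected component of the graph obtained from G by deleting all edges between V(C) and V(G) ∖ V(C) contains a cycle. -/
open SimpleGraph

/-- The set of edges of `G` with one endpoint in `X` and the other endpoint outside of `X`. -/
def cutEdges {V : Type*} (G : SimpleGraph V) (X : Set V) : Set (Sym2 V) :=
  {e | e ∈ G.edgeSet ∧ ∃ a b, a ∈ X ∧ b ∉ X ∧ e = s(a, b)}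

/-- A graph contains a cycle. -/
def HasCycle {α : Type*} (G : SimpleGraph α) : Prop :=
  ∃ (a : α) (c : G.Walk a a), c.IsCycle

/-- Every connected component of `G` contains a cycle: every vertex can reach a cycle. -/
def EveryComponentHasCycle {α : Type*} (G : SimpleGraph α) : Prop :=
  ∀ v : α, ∃ (w : α) (c : G.Walk w w), c.IsCycle ∧ G.Reachable v w

/-- `S` is a cyclic edge cut of `G`: `S` is a set of edges of `G` whose removal
disconnects `G`, and every connected component of `G − S` contains a cycle. -/
def IsCyclicEdgeCut {V : Type*} (G : SimpleGraph V) (S : Set (Sym2 V)) : Prop :=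
  S ⊆ G.edgeSet ∧ ¬ (G.deleteEdges S).Connected ∧ EveryComponentHasCycle (G.deleteEdges S)

lemma aux_echc {V : Type*} [Fintype V] [DecidableEq V] (H : SimpleGraph V)
    (hdeg : ∀ x z : V, ∃ y, H.Adj x y ∧ y ≠ z) : EveryComponentHasCycle H := by
  intro v
  by_contra hnc
  push_neg at hnc
  have key : ∀ n : ℕ, ∃ (x : V) (p : H.Walk x v), p.IsPath ∧ p.length = n := by
    intro n
    induction n with
    | zero => exact ⟨v, Walk.nil, Walk.IsPath.nil, rfl⟩
    | succ n ih =>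
      obtain ⟨x, p, hp, hlen⟩ := ih
      cases p with
      | nil =>
        obtain ⟨y, hy, -⟩ := hdeg v v
        refine ⟨y, Walk.cons hy.symm Walk.nil, ?_, ?_⟩
        · simp [Walk.cons_isPath_iff, hy.symm.ne]
        · simp at hlen ⊢; omega
      | @cons _ x₁ _ h q =>
        obtain ⟨y, hy, hyne⟩ := hdeg x x₁
        rw [Walk.cons_isPath_iff] at hp
        obtain ⟨hq, hxq⟩ := hp
        by_cases hmem : y ∈ q.support
        · exfalso
          have ht : (q.takeUntil y hmem).IsPath := hq.takeUntil hmem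
          have hxt : x ∉ (q.takeUntil y hmem).support :=
            fun hc => hxq (Walk.support_takeUntil_subset _ hmem hc)
          set w2 : H.Walk x y := Walk.cons h (q.takeUntil y hmem) with hw2
          have hw2p : w2.IsPath := by
            rw [hw2, Walk.cons_isPath_iff]; exact ⟨ht, hxt⟩
          have hcyc : (Walk.cons hy w2.reverse).IsCycle := by
            rw [Walk.cons_isCycle_iff]
            refine ⟨hw2p.reverse, ?_⟩
            rw [Walk.edges_reverse, List.mem_reverse, hw2, Walk.edges_cons, List.mem_cons]
            rintro (hms | hms)
            · rw [Sym2.eq_iff] at hms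
              rcases hms with ⟨-, h2⟩ | ⟨h1, -⟩
              · exact hyne h2
              · exact h.ne h1
            · exact hxt (Walk.fst_mem_support_of_mem_edges _ hms)
          exact hnc x (Walk.cons hy w2.reverse) hcyc ⟨(Walk.cons h q).reverse⟩
        · refine ⟨y, Walk.cons hy.symm (Walk.cons h q), ?_, ?_⟩
          · rw [Walk.cons_isPath_iff]
            refine ⟨by rw [Walk.cons_isPath_iff]; exact ⟨hq, hxq⟩, ?_⟩
            rw [Walk.support_cons, List.mem_cons]
            rintro (hc | hc)
            · exact hy.ne' hc
            · exact hmem hc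
          · simp at hlen ⊢; omega
  obtain ⟨x, p, hp, hlen⟩ := key (Fintype.card V)
  have := hp.length_lt
  omega

/-- If `G` is a finite simple graph with minimum degree at least 3 and girth `g ≥ 5`,
then for every cycle `C` of length `g`, every connected component of the graph obtained
by deleting the edges between `V(C)` and its complement contains a cycle. -/
theorem every_component_hasCycle_of_girth_ge_five {V : Type*} [Fintype V] [DecidableEq V]
    (G : SimpleGraph V) [DecidableRel G.Adj] (g : ℕ)
    (hdeg : ∀ v : V, 3 ≤ G.degree v)
    (hg5 : 5 ≤ g) (hgirth : G.girth = g)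
    (u : V) (C : G.Walk u u) (hC : C.IsCycle) (hlen : C.length = g) :
    EveryComponentHasCycle (G.deleteEdges (cutEdges G {v | v ∈ C.support})) := by
  set H := G.deleteEdges (cutEdges G {v | v ∈ C.support}) with hH
  -- adjacency in H for edges with both endpoints on C
  have hAdjIn : ∀ a b : V, a ∈ C.support → b ∈ C.support → G.Adj a b → H.Adj a b := by
    intro a b ha hb hab
    rw [hH, deleteEdges_adj]
    refine ⟨hab, ?_⟩
    rintro ⟨-, a', b', ha', hb', he⟩
    rw [Sym2.eq_iff] at he
    rcases he with ⟨rfl, rfl⟩ | ⟨rfl, rfl⟩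
    · exact hb' hb
    · exact hb' ha
  -- adjacency in H for edges with both endpoints off C
  have hAdjOut : ∀ a b : V, a ∉ C.support → b ∉ C.support → G.Adj a b → H.Adj a b := by
    intro a b ha hb hab
    rw [hH, deleteEdges_adj]
    refine ⟨hab, ?_⟩
    rintro ⟨-, a', b', ha', hb', he⟩
    rw [Sym2.eq_iff] at he
    rcases he with ⟨rfl, rfl⟩ | ⟨rfl, rfl⟩
    · exact ha ha'
    · exact hb ha'
  -- any cycle has length at least g
  have hgirth_le : ∀ (w : V) (c : G.Walk w w), c.IsCycle → g ≤ c.length := by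
    intro w c hc
    have h1 : G.egirth ≤ (c.length : ℕ∞) :=
      iInf_le_of_le w (iInf_le_of_le c (iInf_le _ hc))
    have h2 : G.girth ≤ c.length := by
      have := ENat.toNat_le_toNat h1 (by simp)
      simpa [SimpleGraph.girth] using this
    omega
  -- a vertex off C has at most one neighbour on C
  have hOne : ∀ x : V, x ∉ C.support → ∀ a b : V, a ∈ C.support → b ∈ C.support →
      G.Adj x a → G.Adj x b → a = b := by
    intro x hx a b ha hb hxa hxb
    by_contra hab
    -- a small helper to derive a contradiction from a short path between a and b avoiding x
    have key : ∀ (s t : V) (P : G.Walk s t), s ≠ t → P.IsPath → x ∉ P.support →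
        G.Adj x s → G.Adj x t → P.length + 2 < g → False := by
      intro s t P hst hP hxP hxs hxt hlt
      have hPcat : (P.concat hxt.symm).IsPath := by
        rw [← Walk.isPath_reverse_iff, Walk.reverse_concat, Walk.cons_isPath_iff]
        refine ⟨hP.reverse, ?_⟩
        rw [Walk.support_reverse, List.mem_reverse]
        exact hxP
      have hcyc : (Walk.cons hxs (P.concat hxt.symm)).IsCycle := by
        rw [Walk.cons_isCycle_iff]
        refine ⟨hPcat, ?_⟩
        simp only [Walk.edges_concat, List.concat_eq_append, List.mem_append, List.mem_singleton]
        rintro (hms | hms)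
        · exact hxP (Walk.fst_mem_support_of_mem_edges _ hms)
        · rw [Sym2.eq_iff] at hms
          rcases hms with ⟨h1, -⟩ | ⟨-, h2⟩
          · exact hxt.ne h1
          · exact hst h2
      have := hgirth_le x _ hcyc
      rw [Walk.length_cons, Walk.length_concat] at this
      omega
    -- rotate C to start at a, keeping the relevant facts
    obtain ⟨c', hc', hlenc', hbc', hsub⟩ :
        ∃ c' : G.Walk a a, c'.IsCycle ∧ c'.length = g ∧ b ∈ c'.support ∧
          (∀ y ∈ c'.support, y ∈ C.support) := by
      refine ⟨C.rotate a ha, hC.rotate ha, ?_, ?_, ?_⟩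
      · have h1 := congrArg Walk.length (C.take_spec ha)
        rw [Walk.length_append] at h1
        have h2 : (C.rotate a ha).length =
            (C.dropUntil a ha).length + (C.takeUntil a ha).length := by
          rw [Walk.rotate, Walk.length_append]
        omega
      · have hbt : b ∈ C.support.tail := by
          by_cases hbu : b = u
          · subst hbu
            cases hCnil : C with
            | nil => exact absurd hCnil hC.ne_nil
            | cons h q => rw [Walk.support_cons, List.tail_cons]; exact q.end_mem_support
          · have := C.support_eq_cons
            rcases List.mem_cons.mp (this ▸ hb) with h' | h'
            · exact absurd h' hbu
            · exact h'
        have := (Walk.support_rotate C a ha).mem_iff.mpr hbt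
        exact List.mem_of_mem_tail this
      · intro y hy
        rcases List.mem_cons.mp ((C.rotate a ha).support_eq_cons ▸ hy) with rfl | hy'
        · exact ha
        · exact List.mem_of_mem_tail ((Walk.support_rotate C a ha).mem_iff.mp hy')
    revert hc' hlenc' hbc' hsub
    cases c' with
    | nil => intro hc' _ _ _; exact hc'.ne_nil rfl
    | @cons _ w1 _ h1 rest =>
      intro hc' hlenc' hbc' hsub
      rw [Walk.cons_isCycle_iff] at hc'
      obtain ⟨hrest, hedge⟩ := hc'
      have hbrest : b ∈ rest.support := by
        rcases List.mem_cons.mp ((Walk.support_cons h1 rest) ▸ hbc') with rfl | h'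
        · exact absurd rfl hab
        · exact h'
      have hP1 : (rest.takeUntil b hbrest).IsPath := hrest.takeUntil hbrest
      have hP2 : (rest.dropUntil b hbrest).IsPath := hrest.dropUntil hbrest
      have hsum : (rest.takeUntil b hbrest).length + (rest.dropUntil b hbrest).length
          = rest.length := by
        have := congrArg Walk.length (rest.take_spec hbrest)
        rwa [Walk.length_append] at this
      have hrestlen : rest.length + 1 = g := by
        rw [Walk.length_cons] at hlenc'; omega
      -- a ∉ support of takeUntil
      have hand : a ∉ (rest.takeUntil b hbrest).support := by
        have hnd : ((rest.takeUntil b hbrest).support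
            ++ (rest.dropUntil b hbrest).support.tail).Nodup := by
          rw [← Walk.support_append, Walk.take_spec]
          exact hrest.support_nodup
        have hmem2 : a ∈ (rest.dropUntil b hbrest).support.tail :=
          Walk.end_mem_tail_support_of_ne (Ne.symm hab) _
        rw [List.nodup_append] at hnd
        exact fun hc => hnd.2.2 a hc a hmem2 rfl
      -- x is not on c'
      have hxc : ∀ y : V, y ∈ (Walk.cons h1 rest).support → y ≠ x := by
        intro y hy heq
        exact hx (heq ▸ hsub y hy)
      -- Q1 : path from a to b
      have hQ1 : (Walk.cons h1 (rest.takeUntil b hbrest)).IsPath := by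
        rw [Walk.cons_isPath_iff]; exact ⟨hP1, hand⟩
      have hxQ1 : x ∉ (Walk.cons h1 (rest.takeUntil b hbrest)).support := by
        intro hc
        rcases List.mem_cons.mp ((Walk.support_cons _ _) ▸ hc) with rfl | hc'
        · exact hx ha
        · exact hxc x (by
            rw [Walk.support_cons, List.mem_cons]
            exact Or.inr (Walk.support_takeUntil_subset _ hbrest hc')) rfl
      have hxP2 : x ∉ (rest.dropUntil b hbrest).support := by
        intro hc
        exact hxc x (by
          rw [Walk.support_cons, List.mem_cons]
          exact Or.inr (Walk.support_dropUntil_subset _ hbrest hc)) rfl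
      rcases le_or_gt (Walk.cons h1 (rest.takeUntil b hbrest)).length
          (rest.dropUntil b hbrest).length with hle | hle
      · refine key a b _ hab hQ1 hxQ1 hxa hxb ?_
        rw [Walk.length_cons] at hle ⊢
        omega
      · refine key b a _ (Ne.symm hab) hP2 hxP2 hxb hxa ?_
        rw [Walk.length_cons] at hle
        omega
  -- minimum degree two in H
  apply aux_echc
  intro x z
  by_cases hx : x ∈ C.support
  · -- x on the cycle: its two cycle neighbours survive
    obtain ⟨c', hc', hedges⟩ :
        ∃ c' : G.Walk x x, c'.IsCycle ∧ ∀ e ∈ c'.edges, e ∈ C.edges := by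
      exact ⟨C.rotate x hx, hC.rotate hx, fun e he => (Walk.rotate_edges C x hx).mem_iff.mp he⟩
    revert hc' hedges
    cases c' with
    | nil => intro hc' _; exact absurd rfl hc'.ne_nil
    | @cons _ w1 _ h1 rest =>
      intro hc' hedges
      rw [Walk.cons_isCycle_iff] at hc'
      obtain ⟨hrest, hedge⟩ := hc'
      obtain ⟨w2, h2, q2, hq2⟩ := Walk.exists_eq_cons_of_ne (h1.ne) rest.reverse
      have hw2e : s(x, w2) ∈ rest.edges := by
        have : s(x, w2) ∈ rest.reverse.edges := by
          rw [hq2, Walk.edges_cons]; exact List.mem_cons_self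
        rwa [Walk.edges_reverse, List.mem_reverse] at this
      have hne12 : w1 ≠ w2 := by
        rintro rfl
        exact hedge hw2e
      have he1C : s(x, w1) ∈ C.edges := hedges _ (by
        rw [Walk.edges_cons]; exact List.mem_cons_self)
      have he2C : s(x, w2) ∈ C.edges := hedges _ (by
        rw [Walk.edges_cons]; exact List.mem_cons.mpr (Or.inr hw2e))
      have hw1C : w1 ∈ C.support := Walk.snd_mem_support_of_mem_edges C he1C
      have hw2C : w2 ∈ C.support := Walk.snd_mem_support_of_mem_edges C he2C
      by_cases hz : w1 = z
      · exact ⟨w2, hAdjIn x w2 hx hw2C h2, fun hc => hne12 (hz.trans hc.symm)⟩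
      · exact ⟨w1, hAdjIn x w1 hx hw1C h1, hz⟩
  · -- x off the cycle: at most one neighbour lost
    by_contra hno
    push_neg at hno
    have hsubset : G.neighborFinset x ⊆
        insert z ((G.neighborFinset x).filter (· ∈ C.support)) := by
      intro y hy
      rw [mem_neighborFinset] at hy
      by_cases hyC : y ∈ C.support
      · exact Finset.mem_insert.mpr (Or.inr (Finset.mem_filter.mpr
          ⟨(mem_neighborFinset G x y).mpr hy, hyC⟩))
      · exact Finset.mem_insert.mpr (Or.inl (hno y (hAdjOut x y hx hyC hy)))
    have hfil : ((G.neighborFinset x).filter (· ∈ C.support)).card ≤ 1 := by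
      apply Finset.card_le_one.mpr
      intro a ha b hb
      rw [Finset.mem_filter, mem_neighborFinset] at ha hb
      exact hOne x hx a b ha.2 hb.2 ha.1 hb.1
    have h3 : 3 ≤ (G.neighborFinset x).card := hdeg x
    have := Finset.card_le_card hsubset
    have := Finset.card_insert_le z ((G.neighborFinset x).filter (· ∈ C.support))
    omega
end

section
/- Let G be a d-regular graph with d ≥ 3 that has a cyclic edge cut, let S be a cyclic edge cut of minimum size, and write S = E(X,X̄) where |X| ≤ |X̄|, both G[X] and G[X̄] contain a cycle, and X has minimum cardinality among all vertex sets realizing a minimum-size cyclic edge cut in this way. Then every vertex x ∈ X such that the induced subgraph G[X ∖ {x}] contains a cycle has degree at least ⌈d/2⌉ in the induced subgraph G[X]. -/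
open SimpleGraph

lemma reach_closed {V : Type*} {H : SimpleGraph V} {P : Set V}
    (hP : ∀ ⦃a b⦄, H.Adj a b → a ∈ P → b ∈ P) :
    ∀ {u v : V}, H.Reachable u v → u ∈ P → v ∈ P := by
  intro u v h
  obtain ⟨p⟩ := h
  induction p with
  | nil => exact id
  | cons h q ih => exact fun hu => ih (hP h hu)

lemma walk_edges_closed {V : Type*} {H H' : SimpleGraph V} {P : Set V}
    (hP : ∀ ⦃a b⦄, H.Adj a b → a ∈ P → b ∈ P ∧ H'.Adj a b) :
    ∀ {u v : V} (p : H.Walk u v), u ∈ P → ∀ e ∈ p.edges, e ∈ H'.edgeSet := by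
  intro u v p
  induction p with
  | nil => intro _ e he; simp [Walk.edges_nil] at he
  | cons h q ih =>
    intro hu e he
    rw [Walk.edges_cons, List.mem_cons] at he
    obtain ⟨hb, hadj⟩ := hP h hu
    rcases he with rfl | he
    · exact hadj
    · exact ih hb e he

/-- Let `G` be `d`-regular with `d ≥ 3`, let `S` be a minimum-size cyclic edge cut of
`G`, written `S = E(X, X̄)` with `|X| ≤ |X̄|`, both `G[X]` and `G[X̄]` containing cycles,
and `X` of minimum cardinality among vertex sets realizing a minimum cyclic edge cut in
this way. Then every `x ∈ X` such that `G[X ∖ {x}]` contains a cycle has degree at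
least `⌈d/2⌉` in `G[X]`. -/
theorem degree_in_cut_side_ge {V : Type*} [Fintype V] [DecidableEq V]
    (G : SimpleGraph V) [DecidableRel G.Adj] (d : ℕ)
    (hd : 3 ≤ d) (hreg : G.IsRegularOfDegree d)
    (S : Set (Sym2 V)) (X : Set V)
    (hS : IsCyclicEdgeCut G S)
    (hSmin : ∀ T : Set (Sym2 V), IsCyclicEdgeCut G T → S.ncard ≤ T.ncard)
    (hSX : S = cutEdges G X)
    (hXsize : X.ncard ≤ Xᶜ.ncard)
    (hXcyc : HasCycle (G.induce X)) (hXccyc : HasCycle (G.induce Xᶜ))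
    (hXmin : ∀ Y : Set V, IsCyclicEdgeCut G (cutEdges G Y) →
      (cutEdges G Y).ncard = S.ncard → Y.ncard ≤ Yᶜ.ncard →
      HasCycle (G.induce Y) → HasCycle (G.induce Yᶜ) → X.ncard ≤ Y.ncard) :
    ∀ x ∈ X, HasCycle (G.induce (X \ {x})) →
      (d + 1) / 2 ≤ (X ∩ G.neighborSet x).ncard := by
  intro x hx hcyc
  by_contra hk
  push_neg at hk
  set k := (X ∩ G.neighborSet x).ncard with hkdef
  have hk2 : 2 * k + 2 ≤ d + 1 := by
    have h1 : k + 1 ≤ (d + 1) / 2 := hk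
    have h2 : (k + 1) * 2 ≤ d + 1 := (Nat.le_div_iff_mul_le (by norm_num)).1 h1
    omega
  classical
  set G₀ := G.deleteEdges (S ∪ {e | x ∈ e}) with hG0def
  set A := {v | v ∈ X ∧ v ≠ x ∧ ∃ w, (∃ c : G₀.Walk w w, c.IsCycle) ∧ G₀.Reachable v w}
    with hAdef
  have hAmem : ∀ v, v ∈ A ↔
      (v ∈ X ∧ v ≠ x ∧ ∃ w, (∃ c : G₀.Walk w w, c.IsCycle) ∧ G₀.Reachable v w) := by
    intro v; rw [hAdef]; rfl
  have hAX : ∀ {v}, v ∈ A → v ∈ X := fun hv => ((hAmem _).1 hv).1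
  have hAx : ∀ {v}, v ∈ A → v ≠ x := fun hv => ((hAmem _).1 hv).2.1
  have hxA : x ∉ A := fun h => hAx h rfl
  -- adjacency facts about G₀
  have hG0adj : ∀ {a b}, G₀.Adj a b → G.Adj a b ∧ s(a, b) ∉ S ∧ a ≠ x ∧ b ≠ x := by
    intro a b h
    rw [hG0def, deleteEdges_adj] at h
    refine ⟨h.1, fun hs => h.2 (Or.inl hs), ?_, ?_⟩
    · rintro rfl; exact h.2 (Or.inr (by simp))
    · rintro rfl; exact h.2 (Or.inr (by simp))
  have hG0adj' : ∀ {a b}, G.Adj a b → a ∈ X → b ∈ X → a ≠ x → b ≠ x → G₀.Adj a b := by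
    intro a b hab haX hbX hax hbx
    rw [hG0def, deleteEdges_adj]
    refine ⟨hab, ?_⟩
    rintro (hs | hs)
    · rw [hSX] at hs
      obtain ⟨-, a', b', ha', hb', he⟩ := hs
      rw [Sym2.eq_iff] at he
      rcases he with ⟨h1, h2⟩ | ⟨h1, h2⟩
      · exact hb' (h2 ▸ hbX)
      · exact hb' (h1 ▸ haX)
    · simp only [Set.mem_setOf_eq, Sym2.mem_iff] at hs
      rcases hs with rfl | rfl
      · exact hax rfl
      · exact hbx rfl
  have hXstep : ∀ {a b}, G.Adj a b → s(a, b) ∉ S → a ∈ X → b ∈ X := by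
    intro a b hab hs ha
    by_contra hb
    exact hs (hSX ▸ ⟨hab, a, b, ha, hb, rfl⟩)
  have hAclosed : ∀ {a b}, a ∈ A → G₀.Adj a b → b ∈ A := by
    intro a b ha h
    obtain ⟨hG, hs, hax, hbx⟩ := hG0adj h
    obtain ⟨haX, -, w, hc, hr⟩ := (hAmem a).1 ha
    exact (hAmem b).2 ⟨hXstep hG hs haX, hbx, w, hc, (h.symm.reachable).trans hr⟩
  -- s(a,b) ∉ cutEdges G A whenever A-membership of the endpoints agrees
  have hnotT : ∀ {a b}, (a ∈ A ↔ b ∈ A) → s(a, b) ∉ cutEdges G A := by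
    rintro a b hiff ⟨-, a', b', ha', hb', he⟩
    rw [Sym2.eq_iff] at he
    rcases he with ⟨h1, h2⟩ | ⟨h1, h2⟩
    · exact hb' (h2 ▸ hiff.1 (h1 ▸ ha'))
    · exact hb' (h1 ▸ hiff.2 (h2 ▸ ha'))
  have hnotT2 : ∀ {a b}, a ∉ A → b ∉ A → s(a, b) ∉ cutEdges G A :=
    fun ha hb => hnotT (iff_of_false ha hb)
  have hG0le : G₀ ≤ G.deleteEdges (cutEdges G A) := by
    intro a b h
    rw [deleteEdges_adj]
    exact ⟨(hG0adj h).1, hnotT ⟨fun ha => hAclosed ha h, fun hb => hAclosed hb h.symm⟩⟩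
  -- A is nonempty (uses the given cycle in G[X \ {x}])
  have hAne : A.Nonempty := by
    obtain ⟨a, c, hc⟩ := hcyc
    have hax : (a : V) ≠ x := by
      have := a.2.2; simpa using this
    set q := c.map (SimpleGraph.Embedding.induce (X \ {x})).toHom with hqdef
    have hq : q.IsCycle := hc.map (SimpleGraph.Embedding.induce (G := G) (X \ {x})).injective
    have hqe : ∀ e ∈ q.edges, e ∈ G₀.edgeSet := by
      intro e he
      have hsup : ∀ v ∈ q.support, v ∈ X \ {x} := by
        intro v hv
        rw [hqdef, Walk.support_map] at hv
        obtain ⟨u, hu, rfl⟩ := List.mem_map.1 hv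
        exact u.2
      induction e with
      | h a b =>
        have ha := hsup a (q.fst_mem_support_of_mem_edges he)
        have hb := hsup b (q.snd_mem_support_of_mem_edges he)
        have hG : G.Adj a b := q.adj_of_mem_edges he
        exact hG0adj' hG ha.1 hb.1 (by simpa using ha.2) (by simpa using hb.2)
    exact ⟨↑a, (hAmem _).2 ⟨a.2.1, hax, ↑a, ⟨q.transfer G₀ hqe, hq.transfer hqe⟩,
      Reachable.refl _⟩⟩
  -- a vertex outside X
  obtain ⟨b0, c0, -⟩ := hXccyc
  have hb0 : (b0 : V) ∉ X := b0.2
  -- the new cut is disconnecting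
  have hstepT : ∀ ⦃a b⦄, (G.deleteEdges (cutEdges G A)).Adj a b → a ∈ A → b ∈ A := by
    intro a b h ha
    rw [deleteEdges_adj] at h
    by_contra hb
    exact h.2 ⟨h.1, a, b, ha, hb, rfl⟩
  have hnotconn : ¬ (G.deleteEdges (cutEdges G A)).Connected := by
    intro hconn
    obtain ⟨a0, ha0⟩ := hAne
    exact (fun h => hb0 (hAX h)) (reach_closed hstepT (hconn.preconnected a0 ↑b0) ha0)
  -- every vertex outside X reaches a cycle in G - cutEdges G A
  have hstepS : ∀ ⦃a b⦄, (G.deleteEdges S).Adj a b → a ∉ X →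
      b ∉ X ∧ (G.deleteEdges (cutEdges G A)).Adj a b := by
    intro a b h ha
    rw [deleteEdges_adj] at h
    have hb : b ∉ X := fun hb => h.2 (hSX ▸ ⟨h.1, b, a, hb, ha, Sym2.eq_swap.symm⟩)
    exact ⟨hb, deleteEdges_adj.2 ⟨h.1, hnotT2 (fun hA => ha (hAX hA)) (fun hA => hb (hAX hA))⟩⟩
  have hxbar_cyc : ∀ v, v ∉ X → ∃ w, ∃ c : (G.deleteEdges (cutEdges G A)).Walk w w,
      c.IsCycle ∧ (G.deleteEdges (cutEdges G A)).Reachable v w := by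
    intro v hv
    obtain ⟨w, c, hc, hr⟩ := hS.2.2 v
    have hw : w ∉ X := reach_closed (fun a b h ha => (hstepS h ha).1) hr hv
    obtain ⟨p⟩ := hr
    have hpe := walk_edges_closed hstepS p hv
    have hce := walk_edges_closed hstepS c hw
    exact ⟨w, c.transfer _ hce, hc.transfer hce, ⟨p.transfer _ hpe⟩⟩
  -- counting
  have hNcard : (G.neighborSet x).ncard = d := by
    have hdeg := hreg x
    rw [← hdeg, SimpleGraph.degree, Set.ncard_eq_toFinset_card', neighborFinset_def]
  have hsplit : k + (G.neighborSet x ∩ Xᶜ).ncard = d := by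
    have h1 : G.neighborSet x ∩ Xᶜ = G.neighborSet x \ X := by rw [Set.diff_eq]
    have h2 : k = (G.neighborSet x ∩ X).ncard := by rw [hkdef, Set.inter_comm]
    rw [h2, h1, Set.ncard_inter_add_ncard_diff_eq_ncard _ _ (Set.toFinite _), hNcard]
  set E₁ := (fun b => s(x, b)) '' (G.neighborSet x ∩ Xᶜ) with hE1def
  set E₂ := (fun b => s(x, b)) '' (G.neighborSet x ∩ A) with hE2def
  have hinj : ∀ (s : Set V), s ⊆ G.neighborSet x → Set.InjOn (fun b => s(x, b)) s := by
    intro s hs b hb c hc h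
    simp only [Sym2.eq_iff] at h
    rcases h with ⟨-, h2⟩ | ⟨h1, h2⟩
    · exact h2
    · exact absurd (h1 ▸ hs hc) (G.irrefl)
  have hE1card : E₁.ncard = (G.neighborSet x ∩ Xᶜ).ncard :=
    Set.ncard_image_of_injOn (hinj _ Set.inter_subset_left)
  have hE2card : E₂.ncard ≤ k := by
    rw [hE2def, Set.ncard_image_of_injOn (hinj _ Set.inter_subset_left), hkdef]
    exact Set.ncard_le_ncard (fun v hv => ⟨hAX hv.2, hv.1⟩) (Set.toFinite _)
  have hE1S : E₁ ⊆ S := by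
    rintro e ⟨b, ⟨hbN, hbX⟩, rfl⟩
    rw [hSX]
    exact ⟨hbN, x, b, hx, hbX, rfl⟩
  have hTsub : cutEdges G A ⊆ S ∪ E₂ := by
    rintro e ⟨heE, a, b, ha, hb, rfl⟩
    have hGab : G.Adj a b := heE
    by_cases hbX : b ∈ X
    · by_cases hbx : b = x
      · subst hbx
        exact Or.inr ⟨a, ⟨hGab.symm, ha⟩, Sym2.eq_swap⟩
      · exact absurd (hAclosed ha (hG0adj' hGab (hAX ha) hbX (hAx ha) hbx)) hb
    · exact Or.inl (hSX ▸ ⟨heE, a, b, hAX ha, hbX, rfl⟩)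
  have hdisj : Disjoint (cutEdges G A) E₁ := by
    rw [Set.disjoint_left]
    rintro e ⟨-, a, b, ha, hb, rfl⟩ ⟨c, ⟨-, hcX⟩, hc⟩
    rw [Sym2.eq_iff] at hc
    rcases hc with ⟨h1, h2⟩ | ⟨h1, h2⟩
    · exact hAx ha h1.symm
    · exact hcX (h2 ▸ hAX ha)
  have hcount : (cutEdges G A).ncard < S.ncard := by
    have h1 : (cutEdges G A ∪ E₁).ncard = (cutEdges G A).ncard + E₁.ncard :=
      Set.ncard_union_eq hdisj (Set.toFinite _) (Set.toFinite _)
    have h2 : (cutEdges G A ∪ E₁).ncard ≤ (S ∪ E₂).ncard :=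
      Set.ncard_le_ncard (Set.union_subset hTsub (hE1S.trans Set.subset_union_left))
        (Set.toFinite _)
    have h3 := Set.ncard_union_le S E₂
    omega
  -- nonemptiness of the outside neighborhood of x, and x reaches a cycle
  have hNXc : (G.neighborSet x ∩ Xᶜ).Nonempty := by
    rw [← Set.ncard_pos (Set.toFinite _)]
    omega
  have hx_reach : ∃ w, ∃ c : (G.deleteEdges (cutEdges G A)).Walk w w,
      c.IsCycle ∧ (G.deleteEdges (cutEdges G A)).Reachable x w := by
    obtain ⟨b, hbN, hbX⟩ := hNXc
    have hadj : (G.deleteEdges (cutEdges G A)).Adj x b :=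
      deleteEdges_adj.2 ⟨hbN, hnotT2 hxA (fun hA => hbX (hAX hA))⟩
    obtain ⟨w, c, hc, hr⟩ := hxbar_cyc b hbX
    exact ⟨w, c, hc, hadj.reachable.trans hr⟩
  -- every component of G - cutEdges G A has a cycle
  have hevery : EveryComponentHasCycle (G.deleteEdges (cutEdges G A)) := by
    intro v
    by_cases hvX : v ∈ X
    · by_cases hvx : v = x
      · subst hvx; exact hx_reach
      · by_cases hvA : v ∈ A
        · obtain ⟨-, -, w, ⟨c₀, hc₀⟩, hr₀⟩ := (hAmem v).1 hvA
          exact ⟨w, c₀.mapLe hG0le, hc₀.mapLe hG0le, hr₀.mono hG0le⟩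
        · -- the main induction
          have hC' : ∀ {u w} (p : (G.deleteEdges S).Walk u w), u ∈ X → u ∉ A → u ≠ x →
              (G.deleteEdges (cutEdges G A)).Reachable u x ∨
              ((∀ e ∈ p.edges, e ∈ G₀.edgeSet) ∧ w ∈ X ∧ w ∉ A ∧ w ≠ x) := by
            intro u w p
            induction p with
            | nil => intro h1 h2 h3; exact Or.inr ⟨by simp, h1, h2, h3⟩
            | @cons u b w h q ih =>
              intro huX huA hux
              obtain ⟨hG, hsS⟩ := deleteEdges_adj.1 h
              have hbX : b ∈ X := hXstep hG hsS huX
              by_cases hbx : b = x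
              · subst hbx
                exact Or.inl (Adj.reachable (deleteEdges_adj.2 ⟨hG, hnotT2 huA hxA⟩))
              · have hbA : b ∉ A := fun hb =>
                  huA (hAclosed hb (hG0adj' hG.symm hbX huX hbx hux))
                have hG0 : G₀.Adj u b := hG0adj' hG huX hbX hux hbx
                rcases ih hbX hbA hbx with hleft | ⟨hedges, hw⟩
                · exact Or.inl ((Adj.reachable (hG0le hG0)).trans hleft)
                · refine Or.inr ⟨?_, hw⟩
                  intro e he
                  rw [Walk.edges_cons, List.mem_cons] at he
                  rcases he with rfl | he
                  · exact hG0
                  · exact hedges e he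
          obtain ⟨w, c, hc, hr⟩ := hS.2.2 v
          obtain ⟨p⟩ := hr
          rcases hC' p hvX hvA hvx with hleft | ⟨hpe, hwX, hwA, hwx⟩
          · obtain ⟨w', c', hc', hr'⟩ := hx_reach
            exact ⟨w', c', hc', hleft.trans hr'⟩
          · have hvw : (G.deleteEdges (cutEdges G A)).Reachable v w :=
              ⟨(p.transfer G₀ hpe).mapLe hG0le⟩
            rcases hC' c hwX hwA hwx with hleft2 | ⟨hce, -⟩
            · obtain ⟨w', c', hc', hr'⟩ := hx_reach
              exact ⟨w', c', hc', hvw.trans (hleft2.trans hr')⟩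
            · exact absurd ((hAmem w).2 ⟨hwX, hwx, w,
                ⟨c.transfer G₀ hce, hc.transfer hce⟩, Reachable.refl w⟩) hwA
    · exact hxbar_cyc v hvX
  have hcut : IsCyclicEdgeCut G (cutEdges G A) :=
    ⟨fun e he => he.1, hnotconn, hevery⟩
  exact absurd (hSmin _ hcut) (by omega)
end

section
/- Let d ≥ 5 and r ≥ 2 be integers and let ε be a real number with ε > 0. If (d−2−ε)·(1 + (2+ε)·((1+ε)^r − 1)/ε) < (2r+1)(d−2), then ε > d − 2 − 2/(r−1). -/
/-- Quadratic Bernoulli: `(1+x)^n ≥ 1 + n x + (n(n-1)/2) x²` for `x ≥ 0`. -/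
lemma quad_bernoulli (x : ℝ) (hx : 0 ≤ x) :
    ∀ n : ℕ, 1 + n * x + ((n : ℝ) * ((n : ℝ) - 1) / 2) * x ^ 2 ≤ (1 + x) ^ n := by
  intro n
  induction n with
  | zero => norm_num
  | succ n ih =>
    have hn : (0 : ℝ) ≤ n := Nat.cast_nonneg n
    have : (1 + x) ^ (n + 1) = (1 + x) ^ n * (1 + x) := by ring
    rw [this]
    push_cast
    have h1x : (0:ℝ) ≤ 1 + x := by linarith
    have hprod := mul_le_mul_of_nonneg_right ih h1x
    have hn1 : (0:ℝ) ≤ (n:ℝ) * ((n:ℝ) - 1) := by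
      rcases n with _ | m
      · norm_num
      · push_cast
        have : (0:ℝ) ≤ (m:ℝ) := Nat.cast_nonneg m
        nlinarith
    have hcube : 0 ≤ ((n:ℝ) * ((n:ℝ) - 1) / 2) * (x ^ 2 * x) := by positivity
    nlinarith [hprod, hcube]

/-- The odd-girth numerical step: for integers `d ≥ 5` and `r ≥ 2` and a real `ε` with `ε > 0`,
if `(d−2−ε)·(1 + (2+ε)·((1+ε)^r − 1)/ε) < (2r+1)(d−2)` then `ε > d − 2 − 2/(r−1)`. -/
theorem epsilon_lower_bound_odd (d r : ℕ) (hd : 5 ≤ d) (hr : 2 ≤ r)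
    (ε : ℝ) (hε : 0 < ε)
    (h : ((d : ℝ) - 2 - ε) * (1 + (2 + ε) * ((1 + ε) ^ r - 1) / ε) <
      (2 * (r : ℝ) + 1) * ((d : ℝ) - 2)) :
    (d : ℝ) - 2 - 2 / ((r : ℝ) - 1) < ε := by
  by_contra hc
  push_neg at hc
  have hrR : (2 : ℝ) ≤ (r : ℝ) := by exact_mod_cast hr
  have hdR : (5 : ℝ) ≤ (d : ℝ) := by exact_mod_cast hd
  have hr1 : (0 : ℝ) < (r : ℝ) - 1 := by linarith
  set A : ℝ := (d : ℝ) - 2 with hA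
  have h2 : 2 / ((r : ℝ) - 1) ≤ A - ε := by linarith
  have h2' : (2 : ℝ) ≤ (A - ε) * ((r : ℝ) - 1) := by
    rw [div_le_iff₀ hr1] at h2; linarith
  have hAε : 0 < A - ε := by
    have : 0 < 2 / ((r : ℝ) - 1) := by positivity
    linarith
  have key := quad_bernoulli ε hε.le r
  set c : ℝ := (r : ℝ) * ((r : ℝ) - 1) / 2 with hcdef
  have hc0 : 0 ≤ c := by positivity
  have hdiv : (2 + ε) * ((r : ℝ) + c * ε) ≤ (2 + ε) * ((1 + ε) ^ r - 1) / ε := by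
    rw [le_div_iff₀ hε]
    nlinarith [key, hε.le]
  have hmain : (A - ε) * (1 + (2 + ε) * ((r : ℝ) + c * ε)) < (2 * (r : ℝ) + 1) * A := by
    calc (A - ε) * (1 + (2 + ε) * ((r : ℝ) + c * ε))
        ≤ (A - ε) * (1 + (2 + ε) * ((1 + ε) ^ r - 1) / ε) := by
          apply mul_le_mul_of_nonneg_left _ hAε.le
          linarith
      _ < (2 * (r : ℝ) + 1) * A := h
  -- derive contradiction
  have hcr : c * 2 = (r : ℝ) * ((r : ℝ) - 1) := by rw [hcdef]; ring
  nlinarith [mul_pos hε hε, mul_pos hε hr1, mul_nonneg hε.le hc0,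
    mul_pos (mul_pos hε hε) hr1, mul_le_mul_of_nonneg_left h2' hε.le,
    mul_le_mul_of_nonneg_left h2' (mul_nonneg hε.le hε.le)]
end

section
/- There exists a 5-regular graph G on 48 vertices with girth 4 that admits a cyclic edge cut of size 8; in particular, the cyclic edge-connectivity of G is at most 8, which is strictly less than (5−2)·4 = 12. -/
open SimpleGraph

/-! ### An explicit construction -/

/-- Adjacency (on `ℕ` codes `< 48`): two copies of a circulant graph on `ℤ/24` with
connection set `{±1, ±3, 12}`, where the four "antipodal" edges `{k, k+12}` for
`k ∈ {0,2,4,6}` are removed in each copy and replaced by a cross matching between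
corresponding vertices of the two copies. -/
def adjB (a b : ℕ) : Bool :=
  let x := a % 24
  let y := b % 24
  if a / 24 = b / 24 then
    let d := (x + 24 - y) % 24
    d == 1 || d == 23 || d == 3 || d == 21 ||
      (d == 12 && !(x % 12 == 0 || x % 12 == 2 || x % 12 == 4 || x % 12 == 6))
  else
    x == y && (x % 12 == 0 || x % 12 == 2 || x % 12 == 4 || x % 12 == 6)

def myG : SimpleGraph (Fin 48) where
  Adj a b := adjB a.val b.val = true
  symm := ⟨fun a b => by revert a b; decide⟩
  loopless := ⟨fun a => by revert a; decide⟩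

instance : DecidableRel myG.Adj := fun a b =>
  inferInstanceAs (Decidable (adjB a.val b.val = true))

/-- The cyclic edge cut: the 8 cross edges. -/
def myF : Finset (Sym2 (Fin 48)) :=
  {s(0,24), s(2,26), s(4,28), s(6,30), s(12,36), s(14,38), s(16,40), s(18,42)}

def myS : Set (Sym2 (Fin 48)) := ↑myF

instance : DecidablePred (· ∈ myS) := fun e =>
  decidable_of_iff (e ∈ myF) Finset.mem_coe

def myG' : SimpleGraph (Fin 48) := myG.deleteEdges myS

instance : DecidableRel myG'.Adj := fun a b =>
  decidable_of_iff _ (SimpleGraph.deleteEdges_adj).symm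

set_option maxRecDepth 10000 in
set_option maxHeartbeats 2000000 in
lemma myG_triangle_free :
    ∀ a < 48, ∀ b < 48, adjB a b = true → ∀ c < 48, adjB b c = true →
      adjB c a = false := by decide

/-- Any closed walk of length 3 yields a triangle. -/
lemma length_ne_three {V : Type*} {G : SimpleGraph V}
    (hT : ∀ a b c : V, G.Adj a b → G.Adj b c → ¬ G.Adj c a)
    {a : V} (w : G.Walk a a) : w.length ≠ 3 := by
  intro h3
  cases w with
  | nil => simp at h3
  | cons h p =>
    cases p with
    | nil => simp at h3
    | cons h' q =>
      cases q with
      | nil => simp at h3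
      | cons h'' r =>
        cases r with
        | nil => exact hT _ _ _ h h' h''
        | cons h''' s => simp [SimpleGraph.Walk.length_cons] at h3

lemma myG_tri : ∀ a b c : Fin 48, myG.Adj a b → myG.Adj b c → ¬ myG.Adj c a := by
  intro a b c hab hbc hca
  have := myG_triangle_free a.val a.isLt b.val b.isLt hab c.val c.isLt hbc
  rw [show myG.Adj c a ↔ adjB c.val a.val = true from Iff.rfl, this] at hca
  exact Bool.false_ne_true hca

/-- The 4-cycle `0 - 1 - 4 - 3 - 0` in `myG`. -/
def c4 : myG.Walk 0 0 :=
  .cons (show myG.Adj 0 1 by decide)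
    (.cons (show myG.Adj 1 4 by decide)
      (.cons (show myG.Adj 4 3 by decide)
        (.cons (show myG.Adj 3 0 by decide) .nil)))

lemma c4_isCycle : c4.IsCycle := by
  rw [SimpleGraph.Walk.isCycle_def, SimpleGraph.Walk.isTrail_def]
  refine ⟨?_, by simp [c4], ?_⟩ <;> · show List.Nodup _; decide

lemma myG_girth : myG.girth = 4 := by
  have hub : myG.egirth ≤ (c4.length : ℕ∞) :=
    iInf_le_of_le 0 (iInf_le_of_le c4 (iInf_le _ c4_isCycle))
  have hub' : myG.egirth ≤ 4 := by simpa [c4] using hub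
  have hlb : (4 : ℕ∞) ≤ myG.egirth := by
    rw [SimpleGraph.le_egirth]
    intro a w hw
    have h3 := hw.three_le_length
    have hne := length_ne_three myG_tri w
    exact_mod_cast by omega
  have : myG.egirth = 4 := le_antisymm hub' hlb
  rw [SimpleGraph.girth, this]
  rfl

/-! ### Properties of the cut graph -/

set_option maxHeartbeats 1000000 in
lemma side_pres : ∀ a b : Fin 48, myG'.Adj a b → (a.val < 24 ↔ b.val < 24) := by decide

lemma walk_side : ∀ {a b : Fin 48}, myG'.Walk a b → (a.val < 24 ↔ b.val < 24) := by
  intro a b w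
  induction w with
  | nil => exact Iff.rfl
  | cons h p ih => exact (side_pres _ _ h).trans ih

lemma myG'_not_connected : ¬ myG'.Connected := by
  intro hc
  obtain ⟨w⟩ := hc.preconnected 0 24
  have := (walk_side w).mp (by decide)
  exact absurd this (by decide)

set_option maxHeartbeats 1000000 in
lemma adj_pred : ∀ v : Fin 48, v.val % 24 ≠ 0 →
    myG'.Adj v ⟨v.val - 1, Nat.lt_of_le_of_lt (Nat.sub_le _ _) v.isLt⟩ := by decide

lemma reach_base : ∀ n (v : Fin 48), v.val = n →
    myG'.Reachable v (if v.val < 24 then 0 else 24) := by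
  intro n
  induction n using Nat.strong_induction_on with
  | _ n ih =>
    intro v hv
    have hvlt := v.isLt
    by_cases h0 : v.val % 24 = 0
    · have : v.val = 0 ∨ v.val = 24 := by omega
      rcases this with h | h
      · rw [if_pos (by omega)]
        exact ((Fin.ext h : v = (0 : Fin 48)) ▸ SimpleGraph.Reachable.refl _)
      · rw [if_neg (by omega)]
        exact ((Fin.ext h : v = (24 : Fin 48)) ▸ SimpleGraph.Reachable.refl _)
    · have hadj := adj_pred v h0
      set w : Fin 48 := ⟨v.val - 1, Nat.lt_of_le_of_lt (Nat.sub_le _ _) v.isLt⟩ with hw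
      have hr := ih (v.val - 1) (by omega) w rfl
      have hiff : (if w.val < 24 then (0 : Fin 48) else 24)
          = (if v.val < 24 then (0 : Fin 48) else 24) := by
        have hwv : w.val = v.val - 1 := rfl
        by_cases hc : v.val < 24
        · rw [if_pos hc, if_pos (by omega)]
        · rw [if_neg hc, if_neg (by omega)]
      exact hadj.reachable.trans (hiff ▸ hr)

/-- 4-cycle at `0` in `myG'`. -/
def c4' : myG'.Walk 0 0 :=
  .cons (show myG'.Adj 0 1 by decide)
    (.cons (show myG'.Adj 1 4 by decide)
      (.cons (show myG'.Adj 4 3 by decide)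
        (.cons (show myG'.Adj 3 0 by decide) .nil)))

/-- 4-cycle at `24` in `myG'`. -/
def c4'' : myG'.Walk 24 24 :=
  .cons (show myG'.Adj 24 25 by decide)
    (.cons (show myG'.Adj 25 28 by decide)
      (.cons (show myG'.Adj 28 27 by decide)
        (.cons (show myG'.Adj 27 24 by decide) .nil)))

lemma c4'_isCycle : c4'.IsCycle := by
  rw [SimpleGraph.Walk.isCycle_def, SimpleGraph.Walk.isTrail_def]
  refine ⟨?_, by simp [c4'], ?_⟩ <;> · show List.Nodup _; decide

lemma c4''_isCycle : c4''.IsCycle := by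
  rw [SimpleGraph.Walk.isCycle_def, SimpleGraph.Walk.isTrail_def]
  refine ⟨?_, by simp [c4''], ?_⟩ <;> · show List.Nodup _; decide

lemma myG'_ecc : EveryComponentHasCycle myG' := by
  intro v
  have hr := reach_base v.val v rfl
  by_cases h : v.val < 24
  · exact ⟨0, c4', c4'_isCycle, by rwa [if_pos h] at hr⟩
  · exact ⟨24, c4'', c4''_isCycle, by rwa [if_neg h] at hr⟩

lemma myS_sub : myS ⊆ myG.edgeSet := by
  intro e he
  rw [myS, Finset.mem_coe] at he
  fin_cases he <;> · rw [SimpleGraph.mem_edgeSet]; decide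

lemma myG_deg : ∀ v : Fin 48, myG.degree v = 5 := by decide

/-- Example: there exists a 5-regular graph on 48 vertices with girth 4 that admits a
cyclic edge cut of size 8; in particular its cyclic edge-connectivity is at most 8,
which is strictly less than `(5−2)·4 = 12`. -/
theorem exists_five_regular_graph_with_small_cyclic_cut :
    ∃ G : SimpleGraph (Fin 48),
      (∀ v : Fin 48, (G.neighborSet v).ncard = 5) ∧ G.girth = 4 ∧
      (∃ S : Set (Sym2 (Fin 48)), IsCyclicEdgeCut G S ∧ S.ncard = 8) ∧
      (8 : ℕ) < (5 - 2) * 4 := by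
  refine ⟨myG, ?_, myG_girth, ⟨myS, ⟨myS_sub, myG'_not_connected, myG'_ecc⟩, ?_⟩, by norm_num⟩
  · intro v
    rw [Set.ncard_eq_toFinset_card']
    exact myG_deg v
  · rw [myS, Set.ncard_coe_finset]
    decide
end

section
/- Let H be a 2-edge-connected finite simple graph with minimum degree at least 3. Then there exists an edge e of H such that H − e is 2-edge-connected. -/
open SimpleGraph

/-- A graph is 2-edge-connected if it is connected, has at least two vertices, and has
no bridge. -/
def TwoEdgeConnected {α : Type*} (G : SimpleGraph α) : Prop :=
  G.Connected ∧ (∃ u v : α, u ≠ v) ∧ ∀ e : Sym2 α, ¬ G.IsBridge e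

section Aux

set_option linter.unusedSectionVars false

variable {V : Type*} {H : SimpleGraph V}

/-- `Good G` : the subgraph `G` is connected, and remains connected after deleting
any single edge. -/
def Good (G : H.Subgraph) : Prop :=
  G.Connected ∧ ∀ f ∈ G.edgeSet, (G.deleteEdges {f}).Connected

/-- Split a walk at an edge it contains. -/
lemma walk_split {u w : V} (W : H.Walk u w) {f : Sym2 V} (hf : f ∈ W.edges) :
    ∃ (a b : V) (hab : H.Adj a b) (q1 : H.Walk u a) (q2 : H.Walk b w),
      W = q1.append (Walk.cons hab q2) ∧ s(a, b) = f := by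
  induction W with
  | nil => simp at hf
  | cons h p ih =>
    rw [Walk.edges_cons, List.mem_cons] at hf
    rcases hf with hf | hf
    · exact ⟨_, _, h, Walk.nil, p, by simp, hf.symm⟩
    · obtain ⟨a, b, hab, q1, q2, hW, hfe⟩ := ih hf
      exact ⟨a, b, hab, Walk.cons h q1, q2, by rw [hW, Walk.cons_append], hfe⟩

/-- Deleting an edge of the attached trail from `B ⊔ W.toSubgraph` keeps it connected. -/
lemma del_conn2 {B : H.Subgraph} (hB : B.Connected) {u w : V} (hu : u ∈ B.verts)
    (hw : w ∈ B.verts) (W : H.Walk u w) (hT : W.IsTrail) {f : Sym2 V} (hf : f ∈ W.edges)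
    (hfB : f ∉ B.edgeSet) : ((B ⊔ W.toSubgraph).deleteEdges {f}).Connected := by
  obtain ⟨a, b, hab, q1, q2, rfl, hfe⟩ := walk_split W hf
  have hnd := hT.edges_nodup
  rw [Walk.edges_append, Walk.edges_cons, List.nodup_append] at hnd
  have hf1 : f ∉ q1.edges := fun h => hnd.2.2 f h f (hfe ▸ List.mem_cons_self) rfl
  have hf2 : f ∉ q2.edges := fun h => (List.nodup_cons.1 hnd.2.1).1 (hfe ▸ h)
  have h1 : (B ⊔ q1.toSubgraph).Connected :=
    Subgraph.connected_sup hB.preconnected q1.toSubgraph_connected.preconnected ⟨u, hu, q1.start_mem_verts_toSubgraph⟩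
  have h2 : ((B ⊔ q1.toSubgraph) ⊔ q2.toSubgraph).Connected :=
    Subgraph.connected_sup h1.preconnected q2.toSubgraph_connected.preconnected ⟨w, Or.inl hw, q2.end_mem_verts_toSubgraph⟩
  have hsupp : (q1.append (Walk.cons hab q2)).support = q1.support ++ q2.support := by
    rw [Walk.support_append, Walk.support_cons, List.tail_cons]
  refine h2.mono ⟨?_, ?_⟩ ?_
  · intro x hx
    simp only [Subgraph.verts_sup, Subgraph.deleteEdges_verts, Walk.verts_toSubgraph,
      hsupp] at hx ⊢
    rcases hx with (hx | hx) | hx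
    · exact Or.inl hx
    · exact Or.inr (by simp only [Set.mem_setOf_eq, List.mem_append]; exact Or.inl hx)
    · exact Or.inr (by simp only [Set.mem_setOf_eq, List.mem_append]; exact Or.inr hx)
  · intro x y hxy
    simp only [Subgraph.sup_adj] at hxy
    rw [Subgraph.deleteEdges_adj]
    constructor
    · rcases hxy with (h | h) | h
      · exact Or.inl h
      · exact Or.inr (by rw [Walk.toSubgraph_append]; exact Or.inl h)
      · rw [Walk.toSubgraph_append]
        exact Or.inr (Or.inr (by simp only [Walk.toSubgraph, Subgraph.sup_adj]; exact Or.inr h))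
    · simp only [Set.mem_singleton_iff]
      rcases hxy with (h | h) | h
      · exact fun hc => hfB (hc ▸ Subgraph.mem_edgeSet.2 h)
      · exact fun hc => hf1 (hc ▸ q1.mem_edges_toSubgraph.1 (Subgraph.mem_edgeSet.2 h))
      · exact fun hc => hf2 (hc ▸ q2.mem_edges_toSubgraph.1 (Subgraph.mem_edgeSet.2 h))
  · ext x
    simp only [Subgraph.verts_sup, Subgraph.deleteEdges_verts, Walk.verts_toSubgraph, hsupp,
      Set.mem_union, Set.mem_setOf_eq, List.mem_append]
    tauto

/-- Deleting an edge of `B` from `B ⊔ W.toSubgraph` keeps it connected, provided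
`B` minus that edge is connected. -/
lemma del_conn1 {B : H.Subgraph} {f : Sym2 V} (hB : (B.deleteEdges {f}).Connected) {u w : V}
    (hu : u ∈ B.verts) (W : H.Walk u w) (hfW : f ∉ W.edges) :
    ((B ⊔ W.toSubgraph).deleteEdges {f}).Connected := by
  have h1 : ((B.deleteEdges {f}) ⊔ W.toSubgraph).Connected :=
    Subgraph.connected_sup hB.preconnected W.toSubgraph_connected.preconnected
      ⟨u, by simp only [Subgraph.deleteEdges_verts]; exact hu, W.start_mem_verts_toSubgraph⟩
  refine h1.mono ⟨?_, ?_⟩ ?_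
  · intro x hx
    simpa using hx
  · intro x y hxy
    rw [Subgraph.deleteEdges_adj]
    rcases hxy with h | h
    · rw [Subgraph.deleteEdges_adj] at h
      exact ⟨Or.inl h.1, h.2⟩
    · refine ⟨Or.inr h, ?_⟩
      simp only [Set.mem_singleton_iff]
      exact fun hc => hfW (hc ▸ W.mem_edges_toSubgraph.1 (Subgraph.mem_edgeSet.2 h))
  · ext x
    simp

/-- Attaching an "ear" (a trail between two vertices of `B`, edge-disjoint from `B`)
to a good subgraph yields a good subgraph. -/
lemma good_ext {B : H.Subgraph} (hB : Good B) {u w : V} (hu : u ∈ B.verts) (hw : w ∈ B.verts)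
    (W : H.Walk u w) (hT : W.IsTrail) (hdisj : ∀ f ∈ W.edges, f ∉ B.edgeSet) :
    Good (B ⊔ W.toSubgraph) := by
  constructor
  · exact Subgraph.connected_sup hB.1.preconnected W.toSubgraph_connected.preconnected ⟨u, hu, W.start_mem_verts_toSubgraph⟩
  · intro f hf
    by_cases hfW : f ∈ W.edges
    · exact del_conn2 hB.1 hu hw W hT hfW (hdisj f hfW)
    · have hfB : f ∈ B.edgeSet := by
        rw [Subgraph.edgeSet_sup, Set.mem_union] at hf
        rcases hf with h | h
        · exact h
        · exact absurd (W.mem_edges_toSubgraph.1 h) hfW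
      exact del_conn1 (hB.2 f hfB) hu W hfW

/-- In the subgraph of a path, the only neighbour of the first vertex is the second one. -/
lemma path_start_nbhd {u w : V} (p : H.Walk u w) (hp : p.IsPath) {t : V}
    (h : p.toSubgraph.Adj u t) : t = p.getVert 1 := by
  cases p with
  | nil => simp [Walk.toSubgraph] at h
  | @cons _ y _ hadj q =>
    rw [Walk.cons_isPath_iff] at hp
    simp only [Walk.toSubgraph, Subgraph.sup_adj, subgraphOfAdj_adj] at h
    rcases h with h | h
    · rw [Sym2.eq_iff] at h
      obtain ⟨-, rfl⟩ | ⟨-, hyu⟩ := h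
      · simp
      · exact absurd hyu.symm hadj.ne
    · exact absurd (q.mem_verts_toSubgraph.1 h.fst_mem) hp.2

/-- A path into a set `S` can be truncated at its first visit of `S`. -/
lemma first_hit {S : Set V} : ∀ {x u : V} (p : H.Walk x u), p.IsPath → u ∈ S →
    ∃ (w : V), w ∈ S ∧ ∃ (q : H.Walk x w), q.IsPath ∧
      (∀ f ∈ q.edges, f ∈ p.edges) ∧ (∀ t ∈ q.support, t ∈ p.support) ∧
      (∀ t ∈ q.support, t ∈ S → t = w) := by
  intro x u p
  induction p with
  | nil =>
    intro _ hu
    exact ⟨_, hu, Walk.nil, by simp, by simp, by simp, by simp⟩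
  | @cons x y u hadj p ih =>
    intro hp hu
    rw [Walk.cons_isPath_iff] at hp
    by_cases hx : x ∈ S
    · refine ⟨x, hx, Walk.nil, by simp, by simp, by simp, fun t ht _ => by simpa using ht⟩
    · obtain ⟨w, hw, q, hqp, he, hs, hS⟩ := ih hp.1 hu
      refine ⟨w, hw, Walk.cons hadj q, ?_, ?_, ?_, ?_⟩
      · rw [Walk.cons_isPath_iff]
        exact ⟨hqp, fun hc => hp.2 (hs x hc)⟩
      · intro f hf
        rw [Walk.edges_cons, List.mem_cons] at hf ⊢
        rcases hf with hf | hf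
        · exact Or.inl hf
        · exact Or.inr (he f hf)
      · intro t ht
        rw [Walk.support_cons, List.mem_cons] at ht ⊢
        rcases ht with ht | ht
        · exact Or.inl ht
        · exact Or.inr (hs t ht)
      · intro t ht htS
        rw [Walk.support_cons, List.mem_cons] at ht
        rcases ht with rfl | ht
        · exact absurd htS hx
        · exact hS t ht htS

/-- The main ear-attachment step: a good subgraph which is not spanning can be enlarged
to a good subgraph containing a new vertex all of whose neighbours lie in a two-element
set. -/
lemma ear_step [DecidableEq V] (hH2 : TwoEdgeConnected H) (G : H.Subgraph) (hG : Good G)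
    (hne : G.verts.Nonempty) (hproper : G.verts ≠ Set.univ) :
    ∃ G' : H.Subgraph, Good G' ∧ G.verts ⊆ G'.verts ∧ ∃ x ∈ G'.verts, x ∉ G.verts ∧
      ∃ y z : V, ∀ t, G'.Adj x t → t = y ∨ t = z := by
  obtain ⟨v₀, hv₀⟩ := hne
  obtain ⟨v₁, hv₁⟩ := Set.ne_univ_iff_exists_notMem _ |>.1 hproper
  obtain ⟨P⟩ := hH2.1.preconnected v₀ v₁
  obtain ⟨d, -, hdu, hdx⟩ := P.exists_boundary_dart G.verts hv₀ hv₁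
  obtain ⟨⟨u, x⟩, hadj⟩ := d
  simp only at hdu hdx
  have hreach : (H \ fromEdgeSet {s(u, x)}).Reachable u x := by
    by_contra hc
    exact hH2.2.2 s(u, x) (isBridge_iff.2 hc)
  obtain ⟨P₂⟩ := hreach.symm
  have hPe : ∀ f ∈ P₂.edges, f ∈ H.edgeSet := by
    intro f hf
    have := P₂.edges_subset_edgeSet hf
    rw [edgeSet_sdiff, Set.mem_diff] at this
    exact this.1
  have hPe' : ∀ f ∈ P₂.edges, f ≠ s(u, x) := by
    intro f hf
    have := P₂.edges_subset_edgeSet hf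
    rw [edgeSet_sdiff, Set.mem_diff, edgeSet_fromEdgeSet, Set.mem_diff] at this
    intro hc
    refine this.2 ⟨by simp [hc], ?_⟩
    rw [hc]
    simpa using hadj.ne
  set P₃ := (P₂.transfer H hPe).bypass with hP₃def
  have hP₃ : P₃.IsPath := Walk.bypass_isPath _
  have hP₃e : ∀ f ∈ P₃.edges, f ≠ s(u, x) := by
    intro f hf
    apply hPe'
    have := Walk.edges_bypass_subset (P₂.transfer H hPe) hf
    rwa [Walk.edges_transfer] at this
  obtain ⟨w, hw, q, hqp, hqe, hqs, hqS⟩ := first_hit P₃ hP₃ hdu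
  have hqe' : ∀ f ∈ q.edges, f ≠ s(u, x) := fun f hf => hP₃e f (hqe f hf)
  set W := Walk.cons hadj q with hWdef
  have hT : W.IsTrail := by
    rw [Walk.isTrail_cons]
    exact ⟨hqp.isTrail, fun hc => hqe' _ hc rfl⟩
  have hdisj : ∀ f ∈ W.edges, f ∉ G.edgeSet := by
    intro f hf hfG
    rw [hWdef, Walk.edges_cons, List.mem_cons] at hf
    rcases hf with rfl | hf
    · exact hdx (Subgraph.mem_edgeSet.1 hfG).snd_mem
    · induction f with
      | h a b =>
        have hab := Subgraph.mem_edgeSet.1 hfG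
        have ha : a = w := hqS a (q.fst_mem_support_of_mem_edges hf) hab.fst_mem
        have hb : b = w := hqS b (q.snd_mem_support_of_mem_edges hf) hab.snd_mem
        exact hab.ne (ha.trans hb.symm)
  refine ⟨G ⊔ W.toSubgraph, good_ext hG hdu hw W hT hdisj, ?_, x, ?_, hdx, u, q.getVert 1, ?_⟩
  · intro t ht
    simp only [Subgraph.verts_sup]
    exact Or.inl ht
  · simp only [Subgraph.verts_sup, Walk.verts_toSubgraph, Set.mem_union, Set.mem_setOf_eq]
    exact Or.inr
      (by rw [hWdef, Walk.support_cons]; exact List.mem_cons_of_mem _ q.start_mem_support)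
  · intro t ht
    rcases ht with ht | ht
    · exact absurd ht.fst_mem hdx
    · rw [hWdef] at ht
      simp only [Walk.toSubgraph, Subgraph.sup_adj, subgraphOfAdj_adj] at ht
      rcases ht with ht | ht
      · rw [Sym2.eq_iff] at ht
        rcases ht with ⟨h1, h2⟩ | ⟨h1, h2⟩
        · exact absurd (h1 ▸ hdu) hdx
        · exact Or.inl h1.symm
      · exact Or.inr (path_start_nbhd q hqp ht)

/-- The subgraph of a cycle is good, and the base vertex has only two possible
neighbours in it. -/
lemma cycle_base {v : V} (c : H.Walk v v) (hc : c.IsCycle) :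
    Good c.toSubgraph ∧ v ∈ c.toSubgraph.verts ∧
      ∃ y z : V, ∀ t, c.toSubgraph.Adj v t → t = y ∨ t = z := by
  have hsing : H.singletonSubgraph v ≤ c.toSubgraph :=
    (singletonSubgraph_le_iff _ _).2 c.start_mem_verts_toSubgraph
  have hGoodS : Good (H.singletonSubgraph v) := by
    constructor
    · exact Subgraph.singletonSubgraph_connected
    · intro f hf
      rw [edgeSet_singletonSubgraph] at hf
      exact absurd hf (Set.notMem_empty _)
  have hGood : Good (H.singletonSubgraph v ⊔ c.toSubgraph) := by
    refine good_ext hGoodS ?_ ?_ c hc.isTrail ?_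
    · simp [singletonSubgraph_verts]
    · simp [singletonSubgraph_verts]
    · intro f _
      rw [edgeSet_singletonSubgraph]
      exact Set.notMem_empty _
  rw [sup_eq_right.2 hsing] at hGood
  refine ⟨hGood, c.start_mem_verts_toSubgraph, ?_⟩
  cases c with
  | nil => exact absurd rfl hc.ne_nil
  | @cons _ y _ hadj q =>
    have hq : q.IsPath := ((Walk.cons_isCycle_iff q hadj).1 hc).1
    refine ⟨y, q.reverse.getVert 1, ?_⟩
    intro t ht
    simp only [Walk.toSubgraph, Subgraph.sup_adj, subgraphOfAdj_adj] at ht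
    rcases ht with ht | ht
    · rw [Sym2.eq_iff] at ht
      rcases ht with ⟨-, h2⟩ | ⟨-, h2⟩
      · exact Or.inl h2.symm
      · exact absurd h2.symm hadj.ne
    · right
      apply path_start_nbhd q.reverse hq.reverse
      rwa [Walk.toSubgraph_reverse]

/-- Iterating the ear-attachment step produces a spanning good subgraph which still has a
vertex with at most two neighbours. -/
lemma grow [Fintype V] [DecidableEq V] (hH2 : TwoEdgeConnected H) :
    ∀ (n : ℕ) (G : H.Subgraph), Good G →
      (∃ x ∈ G.verts, ∃ y z : V, ∀ t, G.Adj x t → t = y ∨ t = z) →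
      (Set.univ \ G.verts).ncard ≤ n →
      ∃ Gf : H.Subgraph, Good Gf ∧ Gf.verts = Set.univ ∧
        ∃ x ∈ Gf.verts, ∃ y z : V, ∀ t, Gf.Adj x t → t = y ∨ t = z := by
  intro n
  induction n with
  | zero =>
    intro G hG hinv hcard
    refine ⟨G, hG, ?_, hinv⟩
    have h0 : (Set.univ \ G.verts).ncard = 0 := Nat.le_zero.1 hcard
    have : Set.univ \ G.verts = ∅ := (Set.ncard_eq_zero (Set.toFinite _)).1 h0
    rw [Set.diff_eq_empty] at this
    exact Set.eq_univ_of_univ_subset this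
  | succ n ih =>
    intro G hG hinv hcard
    by_cases hv : G.verts = Set.univ
    · exact ⟨G, hG, hv, hinv⟩
    · obtain ⟨x₀, hx₀, _⟩ := hinv
      obtain ⟨G', hG', hsub, x, hxG', hxG, y, z, hyz⟩ :=
        ear_step hH2 G hG ⟨x₀, hx₀⟩ hv
      refine ih G' hG' ⟨x, hxG', y, z, hyz⟩ ?_
      have hlt : (Set.univ \ G'.verts).ncard < (Set.univ \ G.verts).ncard := by
        apply Set.ncard_lt_ncard _ (Set.toFinite _)
        constructor
        · exact Set.diff_subset_diff_right hsub
        · intro hcontra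
          exact (hcontra ⟨Set.mem_univ x, hxG⟩).2 hxG'
      omega

/-- A graph containing all the edges of a spanning connected subgraph is connected. -/
lemma spanning_conn {G : H.Subgraph} (h : G.Connected) (hv : G.verts = Set.univ)
    {K : SimpleGraph V} (hK : ∀ a b : V, G.Adj a b → K.Adj a b) : K.Connected := by
  have hne : Nonempty V := by
    obtain ⟨w, hw⟩ := h.nonempty
    exact ⟨w⟩
  rw [connected_iff]
  refine ⟨?_, hne⟩
  intro a b
  obtain ⟨p, hp⟩ := (Subgraph.preconnected_iff_forall_exists_walk_subgraph G).1 h.preconnected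
    (hv ▸ Set.mem_univ a) (hv ▸ Set.mem_univ b)
  have hpe : ∀ e ∈ p.edges, e ∈ K.edgeSet := by
    intro e he
    have he2 : e ∈ G.edgeSet := by
      have := p.mem_edges_toSubgraph.2 he
      exact Subgraph.edgeSet_mono hp this
    induction e with
    | h c d => exact (K.mem_edgeSet).2 (hK c d (Subgraph.mem_edgeSet.1 he2))
  exact ⟨p.transfer K hpe⟩

end Aux

/-- If `H` is a 2-edge-connected finite simple graph with minimum degree at least 3,
then there exists an edge `e` of `H` such that `H − e` is still 2-edge-connected. -/
theorem exists_removable_edge {V : Type*} [Fintype V] [DecidableEq V]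
    (H : SimpleGraph V) [DecidableRel H.Adj]
    (h2ec : TwoEdgeConnected H) (hdeg : ∀ v : V, 3 ≤ H.degree v) :
    ∃ e ∈ H.edgeSet, TwoEdgeConnected (H.deleteEdges {e}) := by
  obtain ⟨a₀, b₀, hab₀⟩ := h2ec.2.1
  -- find an edge of `H`
  obtain ⟨b, hb⟩ : ∃ b, H.Adj a₀ b := by
    rw [← degree_pos_iff_exists_adj]
    have := hdeg a₀
    omega
  -- find a cycle in `H`
  have hnb' := h2ec.2.2 s(a₀, b)
  rw [isBridge_iff_adj_and_forall_cycle_notMem hb] at hnb'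
  have hcyc : ¬ ∀ ⦃u : V⦄ (p : H.Walk u u), p.IsCycle → s(a₀, b) ∉ p.edges :=
    fun hall => hnb' hall
  push_neg at hcyc
  obtain ⟨u, c, hc, -⟩ := hcyc
  obtain ⟨hGood, hmem, y₀, z₀, hnbhd⟩ := cycle_base c hc
  -- grow to a spanning good subgraph
  obtain ⟨Gf, hGf, hGfv, x, hx, y, z, hyz⟩ :=
    grow h2ec (Set.univ \ c.toSubgraph.verts).ncard c.toSubgraph hGood
      ⟨u, hmem, y₀, z₀, hnbhd⟩ le_rfl
  -- find an `H`-edge at `x` missing from `Gf`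
  have hsub : ¬ (H.neighborFinset x ⊆ ({y, z} : Finset V)) := by
    intro hsubs
    have h2 : H.degree x ≤ 2 := by
      rw [← card_neighborFinset_eq_degree]
      refine le_trans (Finset.card_le_card hsubs) ?_
      exact le_trans (Finset.card_insert_le _ _) (by simp)
    have := hdeg x
    omega
  obtain ⟨t, ht, htyz⟩ := Finset.not_subset.1 hsub
  have hadj : H.Adj x t := (mem_neighborFinset _ _ _).1 ht
  have hfnot : s(x, t) ∉ Gf.edgeSet := by
    intro hc'
    rcases hyz t (Subgraph.mem_edgeSet.1 hc') with rfl | rfl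
    · exact htyz (by simp)
    · exact htyz (by simp)
  refine ⟨s(x, t), (H.mem_edgeSet).2 hadj, ?_, ⟨a₀, b₀, hab₀⟩, ?_⟩
  · -- connectivity of `H − e`
    refine spanning_conn hGf.1 hGfv ?_
    intro a b' hab
    rw [deleteEdges_adj]
    refine ⟨hab.adj_sub, ?_⟩
    simp only [Set.mem_singleton_iff]
    exact fun hc' => hfnot (hc' ▸ Subgraph.mem_edgeSet.2 hab)
  · -- no bridges in `H − e`
    intro g hg
    induction g with
    | h c' d =>
      rw [isBridge_iff] at hg
      apply hg
      have hK : ((H.deleteEdges {s(x, t)}) \ fromEdgeSet {s(c', d)}).Connected := by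
        by_cases hgG : s(c', d) ∈ Gf.edgeSet
        · refine spanning_conn (hGf.2 _ hgG) (by rw [Subgraph.deleteEdges_verts]; exact hGfv) ?_
          intro a b' hab
          rw [Subgraph.deleteEdges_adj] at hab
          rw [sdiff_adj, deleteEdges_adj, fromEdgeSet_adj]
          refine ⟨⟨hab.1.adj_sub, ?_⟩, ?_⟩
          · simp only [Set.mem_singleton_iff]
            exact fun hc' => hfnot (hc' ▸ Subgraph.mem_edgeSet.2 hab.1)
          · intro hcon
            exact hab.2 (by simpa using hcon.1)
        · refine spanning_conn hGf.1 hGfv ?_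
          intro a b' hab
          rw [sdiff_adj, deleteEdges_adj, fromEdgeSet_adj]
          refine ⟨⟨hab.adj_sub, ?_⟩, ?_⟩
          · simp only [Set.mem_singleton_iff]
            exact fun hc' => hfnot (hc' ▸ Subgraph.mem_edgeSet.2 hab)
          · intro hcon
            have : s(a, b') = s(c', d) := by simpa using hcon.1
            exact hgG (this ▸ Subgraph.mem_edgeSet.2 hab)
      exact hK.preconnected c' d
end

section
/- Let G be a finite simple graph and let x and y be distinct vertices of G joined by at least one pair of edge-disjoint paths. Among all pairs (Q, Q') of edge-disjoint paths from x to y in G, choose one minimizing the total length ℓ(Q) + ℓ(Q'). Then the vertices common to Q and Q' occur in the same order along Q as along Q'; that is, there do not exist vertices a and b, each lying on both Q and Q', such that a precedes b on Q while b precedes a on Q'. -/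
open SimpleGraph

private lemma length_takeUntil_eq' {V : Type*} [DecidableEq V] {G : SimpleGraph V} :
    ∀ {v w : V} (p : G.Walk v w) (u : V) (h : u ∈ p.support),
      (p.takeUntil u h).length = p.support.idxOf u
  | v, _, .nil, u, h => by
      have hv : u = v := by simpa using h
      subst hv
      simp [Walk.takeUntil]
  | v, w, @Walk.cons _ _ _ m _ r p, u, h => by
      by_cases hx : v = u
      · subst hx
        simp [Walk.takeUntil]
      · have h' : u ∈ p.support := by
          rw [Walk.support_cons, List.mem_cons] at h
          rcases h with rfl | h'
          · exact absurd rfl hx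
          · exact h'
        rw [Walk.support_cons]
        have : (Walk.cons r p).takeUntil u h = Walk.cons r (p.takeUntil u h') := by
          simp [Walk.takeUntil, hx]
        rw [this, Walk.length_cons, length_takeUntil_eq' p u h']
        rw [List.idxOf_cons_ne _ (fun he : v = u => hx he)]

private lemma split_of_lt' {V : Type*} [DecidableEq V] {G : SimpleGraph V} {x y : V}
    (p : G.Walk x y) (hp : p.IsPath) (a b : V) (ha : a ∈ p.support) (hb : b ∈ p.support)
    (hab : p.support.idxOf a < p.support.idxOf b) :
    ∃ (q1 : G.Walk x a) (q3 : G.Walk b y),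
      q1.length = p.support.idxOf a ∧
      q3.length + p.support.idxOf b = p.length ∧
      (∀ e ∈ q1.edges, e ∈ p.edges) ∧ (∀ e ∈ q3.edges, e ∈ p.edges) ∧
      (∀ e ∈ q1.edges, e ∉ q3.edges) := by
  set T := p.takeUntil a ha with hT
  set D := p.dropUntil a ha with hD
  have hspec : T.append D = p := p.take_spec ha
  have hTlen : T.length = p.support.idxOf a := length_takeUntil_eq' p a ha
  have hsup : p.support = T.support ++ D.support.tail := by
    rw [← hspec, Walk.support_append]
  -- b is not in T.support
  have hbT : b ∉ T.support := by
    intro hbT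
    have : p.support.idxOf b = T.support.idxOf b := by
      rw [hsup, List.idxOf_append_of_mem hbT]
    have hlt : T.support.idxOf b < T.support.length := List.idxOf_lt_length_iff.mpr hbT
    rw [Walk.length_support] at hlt
    omega
  have hbD : b ∈ D.support := by
    have := hb
    rw [← hspec, Walk.mem_support_append_iff] at this
    rcases this with h' | h'
    · exact absurd h' hbT
    · exact h'
  -- index of b in D.support
  have hDsup : D.support = a :: D.support.tail := D.support_eq_cons
  have hba : b ≠ a := by
    intro h; subst h; omega
  have hidxD : D.support.idxOf b = D.support.tail.idxOf b + 1 := by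
    conv_lhs => rw [hDsup]
    rw [List.idxOf_cons_ne _ (fun he : a = b => hba he.symm)]
  have hidxp : p.support.idxOf b = T.support.length + D.support.tail.idxOf b := by
    rw [hsup, List.idxOf_append_of_notMem hbT]
  have hTsl : T.support.length = T.length + 1 := Walk.length_support T
  -- split D at b
  refine ⟨T, D.dropUntil b hbD, hTlen, ?_, fun e he => p.edges_takeUntil_subset ha he,
    fun e he => p.edges_dropUntil_subset ha (D.edges_dropUntil_subset hbD he), ?_⟩
  · have h1 : (D.takeUntil b hbD).length = D.support.idxOf b := length_takeUntil_eq' D b hbD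
    have h2 : (D.takeUntil b hbD).length + (D.dropUntil b hbD).length = D.length := by
      have := congr_arg Walk.length (D.take_spec hbD)
      rwa [Walk.length_append] at this
    have h3 : T.length + D.length = p.length := by
      have := congr_arg Walk.length hspec
      rwa [Walk.length_append] at this
    omega
  · intro e he1 he3
    have hnd : (T.edges ++ D.edges).Nodup := by
      rw [← Walk.edges_append, hspec]
      exact hp.isTrail.edges_nodup
    have hdisj := (List.nodup_append'.mp hnd).2.2
    exact hdisj he1 (D.edges_dropUntil_subset hbD he3)


/-- Let `G` be a finite simple graph and let `x ≠ y` be vertices joined by a pair of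
edge-disjoint paths `P, P'` minimizing the total length among all such pairs. Then the
vertices common to `P` and `P'` occur in the same order along both paths: there are no
common vertices `a, b` with `a` strictly before `b` on `P` but `b` strictly before `a`
on `P'`. -/
theorem edge_disjoint_paths_common_vertices_same_order {V : Type*} [Fintype V]
    [DecidableEq V] (G : SimpleGraph V) (x y : V) (hxy : x ≠ y)
    (P P' : G.Walk x y) (hP : P.IsPath) (hP' : P'.IsPath)
    (hdisj : ∀ e, e ∈ P.edges → e ∉ P'.edges)
    (hmin : ∀ (Q Q' : G.Walk x y), Q.IsPath → Q'.IsPath →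
      (∀ e, e ∈ Q.edges → e ∉ Q'.edges) → P.length + P'.length ≤ Q.length + Q'.length) :
    ¬ ∃ a b : V, a ∈ P.support ∧ b ∈ P.support ∧ a ∈ P'.support ∧ b ∈ P'.support ∧
        P.support.idxOf a < P.support.idxOf b ∧
        P'.support.idxOf b < P'.support.idxOf a := by
  rintro ⟨a, b, haP, hbP, haP', hbP', h1, h2⟩
  obtain ⟨q1, q3, l1, l3, s1, s3, d13⟩ := split_of_lt' P hP a b haP hbP h1
  obtain ⟨q1', q3', l1', l3', s1', s3', d13'⟩ := split_of_lt' P' hP' b a hbP' haP' h2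
  -- q1 : x→a, q3 : b→y inside P ; q1' : x→b, q3' : a→y inside P'
  set Q := (q1.append q3').bypass with hQ
  set Q' := (q1'.append q3).bypass with hQ'
  have hQedges : ∀ e ∈ Q.edges, e ∈ q1.edges ∨ e ∈ q3'.edges := by
    intro e he
    have := (q1.append q3').edges_bypass_subset he
    rwa [Walk.edges_append, List.mem_append] at this
  have hQ'edges : ∀ e ∈ Q'.edges, e ∈ q1'.edges ∨ e ∈ q3.edges := by
    intro e he
    have := (q1'.append q3).edges_bypass_subset he
    rwa [Walk.edges_append, List.mem_append] at this
  have hdQ : ∀ e, e ∈ Q.edges → e ∉ Q'.edges := by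
    intro e he he'
    rcases hQedges e he with h | h <;> rcases hQ'edges e he' with h' | h'
    · exact hdisj e (s1 e h) (s1' e h')
    · exact d13 e h h'
    · exact d13' e h' h
    · exact hdisj e (s3 e h') (s3' e h)
  have hlen := hmin Q Q' (Walk.bypass_isPath _) (Walk.bypass_isPath _) hdQ
  have hlQ : Q.length ≤ q1.length + q3'.length := by
    have := Walk.length_bypass_le (q1.append q3')
    rwa [Walk.length_append] at this
  have hlQ' : Q'.length ≤ q1'.length + q3.length := by
    have := Walk.length_bypass_le (q1'.append q3)
    rwa [Walk.length_append] at this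
  omega
end
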